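/- arXiv:2412.08630 — 2 statements merged into one kernel-verified Lean document; each statement's English description precedes it below -/
import Mathlib

section
/- Let q > 0 and α ∈ (0,1), and let F be the Young function F(x) = max(|x|·e^{q(log|x|)^α} − e^{1-α}·e^{q(1-α)^α}, 0). Then there exist constants c_{α,q} ≥ 1 and y_{α,q} ≥ 1 such that for all y ≥ y_{α,q}, the Legendre transform satisfies F*(y) ≤ exp(c_{α,q}·(log y)^{1/α}). -/
/-!
Write `L = log y` and `X = exp ((L / q) ^ (1 / α))`, the point beyond which
`exp (q (log |x|) ^ α) ≥ y`. For `|x| ≤ X` we bound `x y - F(x) ≤ X y = exp ((L / q) ^ (1 / α) + L)`;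
for `|x| > X` the growth of `F` gives `x y - F(x) ≤ exp (1 - α) exp (q (1 - α) ^ α)`.
Both bounds are at most `exp (c L ^ (1 / α))` with `c = 1 + q ^ (-1 / α)` once `L ≥ 1 + q`,
because `L ≤ L ^ (1 / α)` for `L ≥ 1` and `α ≤ 1`.
-/

open Real

/-- The Young function `F(x) = max(|x|·e^{q(log|x|)^α} − e^{1−α}·e^{q(1−α)^α}, 0)`. -/
noncomputable def F6 (q α x : ℝ) : ℝ :=
  max (|x| * Real.exp (q * Real.log |x| ^ α) -
    Real.exp (1 - α) * Real.exp (q * (1 - α) ^ α)) 0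

lemma le_mul_log_rpow_of_exp_rpow_lt {q α L t : ℝ} (hq : 0 < q) (hα : 0 < α) (hL : 0 ≤ L)
    (ht : exp ((L / q) ^ (1 / α)) < t) : L ≤ q * log t ^ α := by
  have ht0 : 0 < t := (exp_pos _).trans ht
  have hlog : (L / q) ^ α⁻¹ ≤ log t := by
    rw [← one_div]; exact ((lt_log_iff_exp_lt ht0).2 ht).le
  have hlog0 : 0 ≤ log t := (rpow_nonneg (div_nonneg hL hq.le) _).trans hlog
  rw [rpow_inv_le_iff_of_pos (div_nonneg hL hq.le) hlog0 hα, div_le_iff₀ hq] at hlog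
  linarith

lemma mul_sub_F6_le {q α y : ℝ} (hq : 0 < q) (hα : 0 < α) (hy : 1 ≤ y) (x : ℝ) :
    x * y - F6 q α x ≤
      max (exp ((log y / q) ^ (1 / α)) * y) (exp (1 - α) * exp (q * (1 - α) ^ α)) := by
  have hy0 : 0 < y := one_pos.trans_le hy
  have hxy : x * y ≤ |x| * y := mul_le_mul_of_nonneg_right (le_abs_self x) hy0.le
  rcases le_or_gt |x| (exp ((log y / q) ^ (1 / α))) with hsmall | hlarge
  · have hF : 0 ≤ F6 q α x := le_max_right _ _
    have : |x| * y ≤ exp ((log y / q) ^ (1 / α)) * y := mul_le_mul_of_nonneg_right hsmall hy0.le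
    exact le_max_of_le_left (by linarith)
  · have hF : |x| * exp (q * log |x| ^ α) - exp (1 - α) * exp (q * (1 - α) ^ α) ≤ F6 q α x :=
      le_max_left _ _
    have hgrowth : y ≤ exp (q * log |x| ^ α) := by
      rw [← exp_log hy0]
      exact exp_le_exp.2 (le_mul_log_rpow_of_exp_rpow_lt hq hα (log_nonneg hy) hlarge)
    have : |x| * y ≤ |x| * exp (q * log |x| ^ α) := mul_le_mul_of_nonneg_left hgrowth (abs_nonneg x)
    exact le_max_of_le_right (by linarith)

lemma div_rpow_add_le {q α L : ℝ} (hq : 0 < q) (hα0 : 0 < α) (hα1 : α ≤ 1) (hL : 1 ≤ L) :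
    (L / q) ^ (1 / α) + L ≤ ((1 / q) ^ (1 / α) + 1) * L ^ (1 / α) := by
  have hself : L ≤ L ^ (1 / α) := self_le_rpow_of_one_le hL (by rw [le_div_iff₀ hα0]; linarith)
  rw [show L / q = 1 / q * L by ring, mul_rpow (by positivity) (by linarith)]
  linarith

lemma exp_mul_exp_rpow_le_exp_one_add {q α : ℝ} (hq : 0 ≤ q) (hα0 : 0 < α) (hα1 : α ≤ 1) :
    exp (1 - α) * exp (q * (1 - α) ^ α) ≤ exp (1 + q) := by
  have : (1 - α) ^ α ≤ 1 := rpow_le_one (by linarith) (by linarith) hα0.le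
  rw [← exp_add]
  exact exp_le_exp.2 (by nlinarith)

/-- The Legendre transform of `F6` satisfies `F*(y) ≤ exp(c·(log y)^{1/α})`
for all large `y`. -/
theorem stmt6 (q α : ℝ) (hq : 0 < q) (hα0 : 0 < α) (hα1 : α < 1) :
    ∃ c : ℝ, 1 ≤ c ∧ ∃ y₀ : ℝ, 1 ≤ y₀ ∧ ∀ y : ℝ, y₀ ≤ y →
      (⨆ x : ℝ, (x * y - F6 q α x)) ≤ Real.exp (c * Real.log y ^ (1 / α)) := by
  have hq' : 0 ≤ (1 / q) ^ (1 / α) := rpow_nonneg (by positivity) _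
  refine ⟨(1 / q) ^ (1 / α) + 1, by linarith, exp (1 + q), one_le_exp (by linarith),
    fun y hy => ?_⟩
  have hy1 : 1 ≤ y := (one_le_exp (by linarith)).trans hy
  have hL : 1 + q ≤ log y := (le_log_iff_exp_le (one_pos.trans_le hy1)).2 hy
  have hL0 : 0 ≤ log y := by linarith
  have hbound := div_rpow_add_le hq hα0 hα1.le (show 1 ≤ log y by linarith)
  refine ciSup_le fun x => (mul_sub_F6_le hq hα0 hy1 x).trans (max_le ?_ ?_)
  · calc exp ((log y / q) ^ (1 / α)) * y = exp ((log y / q) ^ (1 / α) + log y) := by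
          rw [exp_add, exp_log (one_pos.trans_le hy1)]
      _ ≤ _ := exp_le_exp.2 hbound
  · calc exp (1 - α) * exp (q * (1 - α) ^ α) ≤ exp (1 + q) :=
          exp_mul_exp_rpow_le_exp_one_add hq.le hα0 hα1.le
      _ ≤ _ := exp_le_exp.2 (by linarith [rpow_nonneg (div_nonneg hL0 hq.le) (1 / α)])
end

section
/- Let q > 0, α ∈ (0,1), G(x) = x·e^{q(log x)^α}. If x ≥ e^{1-α} and y > 0 satisfy y = G'(x), then q·(log x)^α ≤ log y ≤ c·(log x)^α, where c = q + log(1 + qα(1-α)^{α-1})/(1-α)^α. -/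
/-!
With `L = log x ≥ 1 - α`, one has `log y = q L^α + log (1 + qα L^(α-1))`. The correction term
is nonnegative, which gives the lower bound. Since `α - 1 < 0`, it is largest at `L = 1 - α`,
and a constant `C ≥ 0` is at most `C (L / (1 - α))^α` because `L ≥ 1 - α`; this gives the upper bound.
-/

open Real

lemma log_one_add_mul_rpow_le {a L b β : ℝ} (ha : 0 < a) (haL : a ≤ L) (hb : 0 ≤ b)
    (hβ : β ≤ 0) : log (1 + b * L ^ β) ≤ log (1 + b * a ^ β) := by
  have hLβ : 0 ≤ L ^ β := rpow_nonneg (ha.trans_le haL).le β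
  apply log_le_log (by positivity)
  have := mul_le_mul_of_nonneg_left (rpow_le_rpow_of_nonpos ha haL hβ) hb
  linarith

lemma le_div_rpow_mul_rpow {C a L α : ℝ} (hC : 0 ≤ C) (ha : 0 < a) (haL : a ≤ L)
    (hα : 0 ≤ α) : C ≤ C / a ^ α * L ^ α := by
  have hratio : 1 ≤ L ^ α / a ^ α := by
    rw [← div_rpow (ha.trans_le haL).le ha.le]
    exact one_le_rpow ((one_le_div ha).2 haL) hα
  calc C ≤ C * (L ^ α / a ^ α) := le_mul_of_one_le_right hC hratio
    _ = C / a ^ α * L ^ α := by ring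

theorem stmt8_general (q α x y : ℝ) (hq : 0 < q) (hα0 : 0 < α) (hα1 : α < 1)
    (hx : Real.exp (1 - α) ≤ x)
    (hxy : y = Real.exp (q * Real.log x ^ α) * (1 + q * α * Real.log x ^ (α - 1))) :
    q * Real.log x ^ α ≤ Real.log y ∧
    Real.log y ≤
      (q + Real.log (1 + q * α * (1 - α) ^ (α - 1)) / (1 - α) ^ α) * Real.log x ^ α := by
  set L := log x
  have h1α : 0 < 1 - α := by linarith
  have hL : 1 - α ≤ L := (le_log_iff_exp_le ((exp_pos _).trans_le hx)).2 hx
  have hLpos : 0 < L := h1α.trans_le hL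
  have hqα : 0 ≤ q * α := by positivity
  have hcorr : 0 ≤ log (1 + q * α * L ^ (α - 1)) :=
    log_nonneg (le_add_of_nonneg_right (by positivity))
  have hlogy : log y = q * L ^ α + log (1 + q * α * L ^ (α - 1)) := by
    rw [hxy, log_mul (exp_ne_zero _) (by positivity), log_exp]
  refine ⟨by linarith, ?_⟩
  set C := log (1 + q * α * (1 - α) ^ (α - 1))
  have hcorr_le : log (1 + q * α * L ^ (α - 1)) ≤ C :=
    log_one_add_mul_rpow_le h1α hL hqα (by linarith)
  have hC : 0 ≤ C := hcorr.trans hcorr_le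
  calc log y ≤ q * L ^ α + C := by rw [hlogy]; gcongr
    _ ≤ q * L ^ α + C / (1 - α) ^ α * L ^ α := by
        gcongr
        exact le_div_rpow_mul_rpow hC h1α hL hα0.le
    _ = (q + C / (1 - α) ^ α) * L ^ α := by ring

theorem stmt8 (q α x y : ℝ) (hq : 0 < q) (hα0 : 0 < α) (hα1 : α < 1)
    (hx : Real.exp (1 - α) ≤ x) (hy : 0 < y)
    (hxy : y = Real.exp (q * Real.log x ^ α) * (1 + q * α * Real.log x ^ (α - 1))) :
    q * Real.log x ^ α ≤ Real.log y ∧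
    Real.log y ≤
      (q + Real.log (1 + q * α * (1 - α) ^ (α - 1)) / (1 - α) ^ α) * Real.log x ^ α :=
  stmt8_general q α x y hq hα0 hα1 hx hxy
end
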